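/- For all nonnegative integers k and j, the orthonormalized Hermite polynomials h_k defined by the recurrence h_0(x) = π^{-1/4}, h_1(x) = √2 · π^{-1/4} · x, and h_k(x) = √(2/k) · x · h_{k-1}(x) − √((k−1)/k) · h_{k-2}(x) for k ≥ 2, satisfy the orthonormality relation ∫_ℝ h_k(x) h_j(x) e^{−x²} dx = 1 if k = j and 0 otherwise. -/

import Mathlib

/-!
With Mathlib's probabilists' Hermite polynomials `He_k = hermite k`, the three-term recurrence
shows `h_k(x) = He_k(√2 x) / √(k! √π)`. The substitution `y = √2 x` turns the weight `e^{-x²}`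
into `e^{-y²/2}`, and by the Rodrigues formula `He_k(y) e^{-y²/2} = (-1)^k (d/dy)^k e^{-y²/2}`.
Integrating by parts `k` times moves all derivatives onto `He_j`: for `j < k` this kills it,
and for `j = k` it leaves the constant `k!`, so `∫ He_k He_j e^{-y²/2} = δ_{kj} k! √(2π)`.
-/

open MeasureTheory

/-- The orthonormalized Hermite polynomials, defined by the three-term recurrence
`h 0 x = π^(-1/4)`, `h 1 x = √2 · π^(-1/4) · x`,
`h k x = √(2/k) · x · h (k-1) x − √((k−1)/k) · h (k-2) x` for `k ≥ 2`. -/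
noncomputable def hermiteOrtho : ℕ → ℝ → ℝ
  | 0, _ => Real.pi ^ (-(1 : ℝ) / 4)
  | 1, x => Real.sqrt 2 * Real.pi ^ (-(1 : ℝ) / 4) * x
  | (k + 2), x =>
      Real.sqrt (2 / ((k : ℝ) + 2)) * x * hermiteOrtho (k + 1) x -
        Real.sqrt (((k : ℝ) + 1) / ((k : ℝ) + 2)) * hermiteOrtho k x

open Polynomial Real
open scoped Nat

namespace Polynomial

theorem derivative_hermite_succ (n : ℕ) :
    derivative (hermite (n + 1)) = ((n : ℤ[X]) + 1) * hermite n := by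
  induction n with
  | zero => simp
  | succ n ih =>
    rw [hermite_succ, derivative_sub, derivative_mul, derivative_X, ih, derivative_mul,
      derivative_add, derivative_natCast, derivative_one, hermite_succ]
    push_cast
    ring

theorem hermite_succ_succ (n : ℕ) :
    hermite (n + 2) = X * hermite (n + 1) - ((n : ℤ[X]) + 1) * hermite n := by
  rw [hermite_succ (n + 1), derivative_hermite_succ]

theorem iterate_derivative_hermite_self (n : ℕ) : derivative^[n] (hermite n) = (n ! : ℤ[X]) := by
  induction n with
  | zero => simp
  | succ n ih =>
    rw [Function.iterate_succ_apply, derivative_hermite_succ, ← Nat.cast_succ,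
      iterate_derivative_natCast_mul, ih, Nat.factorial_succ, Nat.cast_mul]

end Polynomial

section Gaussian

theorem integrable_aeval_mul_exp_neg_mul_sq {R : Type*} [CommSemiring R] [Algebra R ℝ]
    (p : R[X]) {b : ℝ} (hb : 0 < b) : Integrable fun x : ℝ => aeval x p * exp (-b * x ^ 2) := by
  induction p using Polynomial.induction_on' with
  | add p q hp hq => exact (hp.add hq).congr (.of_forall fun x => by simp [add_mul])
  | monomial n a =>
    have hn : (-1 : ℝ) < n := neg_one_lt_zero.trans_le n.cast_nonneg
    simpa only [aeval_monomial, rpow_natCast, mul_assoc] using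
      (integrable_rpow_mul_exp_neg_mul_sq hb hn).const_mul (algebraMap R ℝ a)

local notation "γ" => fun y : ℝ => exp (-(y ^ 2 / 2))

theorem integrable_aeval_mul_iterate_deriv_gaussian (p : ℤ[X]) (n : ℕ) :
    Integrable fun x : ℝ => aeval x p * deriv^[n] γ x := by
  refine ((integrable_aeval_mul_exp_neg_mul_sq (p * hermite n) one_half_pos).const_mul
    ((-1 : ℝ) ^ n)).congr (.of_forall fun x => ?_)
  simp only [deriv_gaussian_eq_hermite_mul_gaussian, map_mul]
  ring_nf

theorem hasDerivAt_iterate_deriv_gaussian (n : ℕ) (x : ℝ) :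
    HasDerivAt (deriv^[n] γ) (deriv^[n + 1] γ x) x := by
  rw [Function.iterate_succ_apply', funext (deriv_gaussian_eq_hermite_mul_gaussian n)]
  exact (((Polynomial.differentiable_aeval _).const_mul _).mul (by fun_prop)).differentiableAt
    |>.hasDerivAt

theorem integral_aeval_mul_iterate_deriv_gaussian (p : ℤ[X]) (n : ℕ) :
    ∫ x, aeval x p * deriv^[n] γ x =
      (-1) ^ n * ∫ x, aeval x (derivative^[n] p) * exp (-(x ^ 2 / 2)) := by
  induction n generalizing p with
  | zero => simp
  | succ n ih =>
    rw [integral_mul_deriv_eq_deriv_mul_of_integrable (fun x _ => p.hasDerivAt_aeval x)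
      (fun x _ => hasDerivAt_iterate_deriv_gaussian n x)
      (integrable_aeval_mul_iterate_deriv_gaussian p (n + 1))
      (integrable_aeval_mul_iterate_deriv_gaussian (derivative p) n)
      (integrable_aeval_mul_iterate_deriv_gaussian p n), ih, Function.iterate_succ_apply, pow_succ]
    ring

theorem integral_hermite_mul_hermite_mul_gaussian (k j : ℕ) :
    ∫ x, aeval x (hermite k) * aeval x (hermite j) * exp (-(x ^ 2 / 2)) =
      if k = j then k ! * √(2 * π) else 0 := by
  wlog hjk : j ≤ k generalizing k j
  · have := this j k (by omega)
    simp only [mul_comm (aeval _ (hermite j))] at this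
    rw [this]
    rcases eq_or_ne j k with rfl | hne
    · rfl
    · simp [hne, hne.symm]
  have sign : (-1 : ℝ) ^ k * (-1) ^ k = 1 := by rw [← mul_pow]; norm_num
  have rodrigues (x : ℝ) : aeval x (hermite k) * aeval x (hermite j) * exp (-(x ^ 2 / 2)) =
      (-1) ^ k * (aeval x (hermite j) * deriv^[k] γ x) := by
    rw [deriv_gaussian_eq_hermite_mul_gaussian]
    linear_combination (-(aeval x (hermite k) * aeval x (hermite j) * exp (-(x ^ 2 / 2)))) * sign
  simp_rw [rodrigues, integral_const_mul, integral_aeval_mul_iterate_deriv_gaussian, ← mul_assoc,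
    sign, one_mul]
  rcases hjk.lt_or_eq with hlt | rfl
  · rw [iterate_derivative_eq_zero (natDegree_hermite.trans_lt hlt), if_neg hlt.ne']
    simp
  · have gaussian : ∫ x, exp (-(x ^ 2 / 2)) = √(2 * π) := by
      convert integral_gaussian (1 / 2) using 3 <;> ring_nf
    rw [iterate_derivative_hermite_self, if_pos rfl]
    simp_rw [map_natCast, integral_const_mul, gaussian]

end Gaussian

theorem rpow_neg_one_div_four_eq_inv_sqrt_sqrt {x : ℝ} (hx : 0 ≤ x) :
    x ^ (-(1 : ℝ) / 4) = (√(√x))⁻¹ := by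
  rw [sqrt_eq_rpow, sqrt_eq_rpow, ← rpow_mul hx, ← rpow_neg hx]
  norm_num

theorem sqrt_factorial_succ_mul (n : ℕ) (c : ℝ) : √((n + 1)! * c) = √(n + 1) * √(n ! * c) := by
  rw [Nat.factorial_succ, Nat.cast_mul, mul_assoc, sqrt_mul (by positivity)]
  push_cast
  rfl

theorem hermiteOrtho_eq_aeval_hermite (k : ℕ) (x : ℝ) :
    hermiteOrtho k x = (√(k ! * √π))⁻¹ * aeval (√2 * x) (hermite k) := by
  induction k using Nat.twoStepInduction with
  | zero => simp [hermiteOrtho, rpow_neg_one_div_four_eq_inv_sqrt_sqrt pi_pos.le]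
  | one =>
    simp only [hermiteOrtho, rpow_neg_one_div_four_eq_inv_sqrt_sqrt pi_pos.le, Nat.factorial_one,
      Nat.cast_one, one_mul, hermite_one, aeval_X]
    ring
  | more n ih ih1 =>
    rw [hermiteOrtho, ih, ih1, hermite_succ_succ, sqrt_factorial_succ_mul (n + 1),
      sqrt_factorial_succ_mul n, sqrt_div' _ (by positivity), sqrt_div' _ (by positivity)]
    simp only [map_sub, map_mul, aeval_X, map_add, map_natCast, map_one]
    push_cast
    have : 0 < √(n ! * √π) := by positivity
    field_simp
    rw [sq_sqrt (by positivity)]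
    ring_nf

/-- Orthonormality of the Hermite polynomials with respect to the weight `e^(−x²)`:
`∫ h_k(x) h_j(x) e^(−x²) dx = δ_{kj}`. -/
theorem hermiteOrtho_orthonormal (k j : ℕ) :
    (∫ x : ℝ, hermiteOrtho k x * hermiteOrtho j x * Real.exp (-(x ^ 2))) =
      if k = j then 1 else 0 := by
  set G : ℝ → ℝ := fun y => aeval y (hermite k) * aeval y (hermite j) * exp (-(y ^ 2 / 2)) with hG
  have rescale (x : ℝ) : hermiteOrtho k x * hermiteOrtho j x * exp (-(x ^ 2)) =
      (√(k ! * √π))⁻¹ * (√(j ! * √π))⁻¹ * G (√2 * x) := by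
    simp only [hG, hermiteOrtho_eq_aeval_hermite, mul_pow, sq_sqrt zero_le_two]
    ring_nf
  rw [funext rescale, integral_const_mul, Measure.integral_comp_mul_left G, hG,
    integral_hermite_mul_hermite_mul_gaussian, smul_eq_mul]
  split_ifs with h
  · subst h
    rw [sqrt_mul zero_le_two, abs_of_pos (by positivity)]
    field_simp
    rw [sq_sqrt (by positivity)]
  · simp
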